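/- Let F̃(·; y) be μ-strongly convex and differentiable with ∇₁F̃(y; y) = ∇F(y), G convex, K closed convex, and x̂(y) = argmin_{x∈K} F̃(x; y) + G(x). Then for every y ∈ K: ⟨∇F(y), x̂(y) − y⟩ + G(x̂(y)) − G(y) ≤ −μ‖x̂(y) − y‖². -/

import Mathlib

/-!
The best response `x̂ = x̂(y)` minimises the `μ`-strongly convex function `F̃(·; y) + G` over `K`,
so comparing with the competitor `y` gives a quadratic margin:
`F̃(x̂; y) + G(x̂) + μ/2 ‖x̂ - y‖² ≤ F̃(y; y) + G(y)`.
The strong-convexity gradient inequality at `y`, with `∇₁F̃(y; y) = ∇F(y)`, gives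
`⟪∇F(y), x̂ - y⟫ + μ/2 ‖x̂ - y‖² ≤ F̃(x̂; y) - F̃(y; y)`. Adding the two cancels `F̃` and
leaves the full margin `μ ‖x̂ - y‖²`.
-/

open RealInnerProductSpace

theorem ConvexOn.hasFDerivAt_le_sub {E : Type*} [NormedAddCommGroup E] [NormedSpace ℝ E]
    {s : Set E} {f : E → ℝ} {f' : E →L[ℝ] ℝ} {x y : E}
    (hf : ConvexOn ℝ s f) (hx : x ∈ s) (hy : y ∈ s) (hf' : HasFDerivAt f f' y) :
    f' (x - y) ≤ f x - f y := by
  let L : ℝ →ᵃ[ℝ] E := AffineMap.lineMap y x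
  have hderiv : HasDerivAt (f ∘ L) (f' (x - y)) 0 :=
    HasFDerivAt.comp_hasDerivAt (0 : ℝ) (by simpa [L] using hf') AffineMap.hasDerivAt_lineMap
  simpa [L, slope_def_field] using (hf.comp_affineMap L).le_slope_of_hasDerivAt
    (by simpa [L] using hy) (by simpa [L] using hx) zero_lt_one hderiv

section InnerProductSpace

variable {E : Type*} [NormedAddCommGroup E] [InnerProductSpace ℝ E]
  {s : Set E} {f g : E → ℝ} {m : ℝ} {a x y : E}

theorem StrongConvexOn.add_convexOn (hf : StrongConvexOn s m f) (hg : ConvexOn ℝ s g) :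
    StrongConvexOn s m (f + g) := by
  have h := hf.add (uniformConvexOn_zero.2 hg)
  rwa [add_zero] at h

theorem StrongConvexOn.inner_gradient_add_le [CompleteSpace E] {f' : E}
    (hf : StrongConvexOn s m f) (hx : x ∈ s) (hy : y ∈ s) (hf' : HasGradientAt f f' y) :
    ⟪f', x - y⟫ + m / 2 * ‖x - y‖ ^ 2 ≤ f x - f y := by
  have hderiv := hf'.hasFDerivAt.sub ((hasStrictFDerivAt_norm_sq y).hasFDerivAt.const_mul (m / 2))
  have h := (strongConvexOn_iff_convex.1 hf).hasFDerivAt_le_sub hx hy hderiv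
  simp only [sub_apply, InnerProductSpace.toDual_apply_apply,
    smul_apply, coe_innerSL_apply, nsmul_eq_mul, Nat.cast_ofNat,
    smul_eq_mul] at h
  simp only [inner_sub_right, real_inner_self_eq_norm_sq, real_inner_comm x y] at h ⊢
  rw [norm_sub_sq_real]
  linarith

theorem StrongConvexOn.add_sq_le_of_isMinOn (hf : StrongConvexOn s m f) (hmin : IsMinOn f s a)
    (ha : a ∈ s) (hy : y ∈ s) : f a + m / 2 * ‖y - a‖ ^ 2 ≤ f y := by
  set A := m / 2 * ‖y - a‖ ^ 2
  suffices hsegment : Set.Ioo 0 1 ⊆ {t : ℝ | t * A ≤ f y - f a} by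
    have hclosed : IsClosed {t : ℝ | t * A ≤ f y - f a} :=
      isClosed_le (continuous_id.mul continuous_const) continuous_const
    have h : (1 : ℝ) ∈ {t : ℝ | t * A ≤ f y - f a} :=
      hclosed.closure_subset_iff.2 hsegment (by simp [closure_Ioo zero_ne_one])
    linarith [show 1 * A ≤ f y - f a from h]
  rintro t ⟨ht₀, ht₁⟩
  have hconv := hf.2 ha hy ht₀.le (sub_nonneg.2 ht₁.le) (add_sub_cancel t 1)
  have hle : f a ≤ f (t • a + (1 - t) • y) :=
    hmin (hf.1 ha hy ht₀.le (sub_nonneg.2 ht₁.le) (add_sub_cancel t 1))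
  rw [norm_sub_rev, smul_eq_mul, smul_eq_mul] at hconv
  change _ ≤ _ - t * (1 - t) * A at hconv
  have h1t : 0 < 1 - t := sub_pos.2 ht₁
  show t * A ≤ f y - f a
  -- `hconv` and `hle` give `(1 - t) * (f y - f a - t * A) ≥ 0`
  nlinarith

end InnerProductSpace

theorem stmt13_general {p : ℕ} (K : Set (EuclideanSpace ℝ (Fin p)))
    (F' : EuclideanSpace ℝ (Fin p) → EuclideanSpace ℝ (Fin p))
    (G : EuclideanSpace ℝ (Fin p) → ℝ) (hG : ConvexOn ℝ Set.univ G)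
    (Ft : EuclideanSpace ℝ (Fin p) → EuclideanSpace ℝ (Fin p) → ℝ)
    (Ft' : EuclideanSpace ℝ (Fin p) → EuclideanSpace ℝ (Fin p) → EuclideanSpace ℝ (Fin p))
    (μ : ℝ)
    (hsc : ∀ y ∈ K, StrongConvexOn K μ (fun x => Ft x y))
    (hdiff : ∀ y ∈ K, ∀ x, HasGradientAt (fun z => Ft z y) (Ft' x y) x)
    (hconsist : ∀ y ∈ K, Ft' y y = F' y)
    (xhat : EuclideanSpace ℝ (Fin p) → EuclideanSpace ℝ (Fin p))
    (hxhat : ∀ y ∈ K, xhat y ∈ K ∧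
      ∀ x ∈ K, Ft (xhat y) y + G (xhat y) ≤ Ft x y + G x) :
    ∀ y ∈ K, ⟪F' y, xhat y - y⟫ + G (xhat y) - G y ≤ -μ * ‖xhat y - y‖ ^ 2 := by
  intro y hy
  obtain ⟨hxK, hmin⟩ := hxhat y hy
  have hobj : StrongConvexOn K μ ((fun x => Ft x y) + G) :=
    (hsc y hy).add_convexOn (hG.subset (Set.subset_univ K) (hsc y hy).1)
  have hmargin := hobj.add_sq_le_of_isMinOn hmin hxK hy
  have hgrad := (hsc y hy).inner_gradient_add_le hxK hy (hdiff y hy y)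
  rw [hconsist y hy] at hgrad
  simp only [Pi.add_apply, norm_sub_rev y] at hmargin
  linarith

theorem stmt13 {p : ℕ} (K : Set (EuclideanSpace ℝ (Fin p)))
    (hKcl : IsClosed K) (hKcv : Convex ℝ K)
    (F : EuclideanSpace ℝ (Fin p) → ℝ)
    (F' : EuclideanSpace ℝ (Fin p) → EuclideanSpace ℝ (Fin p))
    (hF : ∀ x, HasGradientAt F (F' x) x)
    (G : EuclideanSpace ℝ (Fin p) → ℝ) (hG : ConvexOn ℝ Set.univ G)
    (Ft : EuclideanSpace ℝ (Fin p) → EuclideanSpace ℝ (Fin p) → ℝ)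
    (Ft' : EuclideanSpace ℝ (Fin p) → EuclideanSpace ℝ (Fin p) → EuclideanSpace ℝ (Fin p))
    (μ : ℝ) (hμ : 0 < μ)
    (hsc : ∀ y ∈ K, StrongConvexOn K μ (fun x => Ft x y))
    (hdiff : ∀ y ∈ K, ∀ x, HasGradientAt (fun z => Ft z y) (Ft' x y) x)
    (hconsist : ∀ y ∈ K, Ft' y y = F' y)
    (xhat : EuclideanSpace ℝ (Fin p) → EuclideanSpace ℝ (Fin p))
    (hxhat : ∀ y ∈ K, xhat y ∈ K ∧
      ∀ x ∈ K, Ft (xhat y) y + G (xhat y) ≤ Ft x y + G x) :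
    ∀ y ∈ K, ⟪F' y, xhat y - y⟫ + G (xhat y) - G y ≤ -μ * ‖xhat y - y‖ ^ 2 :=
  stmt13_general K F' G hG Ft Ft' μ hsc hdiff hconsist xhat hxhat
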